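/- Let A be a symmetric 2×2 real matrix, let μ ≥ 0 and λ ≥ 0 be real numbers, and let C A = 2μ A + λ tr(A) I₂ denote the action of the isotropic fourth-order stiffness tensor on A. Then (C A) : (C A) ≤ (4μ + 2λ) ((C A) : A), where X : Y = tr(Xᵀ Y) denotes the Frobenius inner product of 2×2 real matrices. (Lemma 3.3 of the paper.) -/

import Mathlib

/-!
Writing `t = tr A`, the stiffness tensor satisfies `(C A) : B = 2μ (A : B) + λ t tr B` and
`tr (C A) = (2μ + nλ) t`, hence `(C A) : (C A) = 2μ ((C A) : A) + λ (2μ + nλ) t²`.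
Since `(C A) : A = 2μ (A : A) + λ t² ≥ λ t²`, the last term is at most `(2μ + nλ) ((C A) : A)`.
-/

open Matrix

namespace Matrix

variable {n R : Type*} [Fintype n]

theorem trace_transpose_mul_comm [CommSemiring R] (A B : Matrix n n R) :
    (Aᵀ * B).trace = (Bᵀ * A).trace := by
  rw [← trace_transpose, transpose_mul, transpose_transpose]

theorem trace_transpose_mul_self_nonneg (A : Matrix n n ℝ) : 0 ≤ (Aᵀ * A).trace := by
  simpa [conjTranspose_eq_transpose_of_trivial] using
    (posSemidef_conjTranspose_mul_self A).trace_nonneg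

variable [DecidableEq n]

section CommRing

variable [CommRing R]

def isotropicStiffness (μ lam : R) (A : Matrix n n R) : Matrix n n R :=
  (2 * μ) • A + (lam * A.trace) • 1

variable (μ lam : R) (A : Matrix n n R)

theorem trace_transpose_isotropicStiffness_mul (B : Matrix n n R) :
    ((isotropicStiffness μ lam A)ᵀ * B).trace =
      2 * μ * (Aᵀ * B).trace + lam * A.trace * B.trace := by
  simp [isotropicStiffness, Matrix.add_mul, trace_add, trace_smul, mul_assoc]

theorem trace_isotropicStiffness :
    (isotropicStiffness μ lam A).trace = (2 * μ + Fintype.card n * lam) * A.trace := by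
  simp only [isotropicStiffness, trace_add, trace_smul, trace_one, smul_eq_mul]
  ring

end CommRing

theorem trace_transpose_isotropicStiffness_mul_self_le {μ lam : ℝ} (hμ : 0 ≤ μ) (hlam : 0 ≤ lam)
    (A : Matrix n n ℝ) :
    ((isotropicStiffness μ lam A)ᵀ * isotropicStiffness μ lam A).trace ≤
      (4 * μ + Fintype.card n * lam) * ((isotropicStiffness μ lam A)ᵀ * A).trace := by
  set C := isotropicStiffness μ lam A
  have hCC : (Cᵀ * C).trace =
      2 * μ * (Cᵀ * A).trace + lam * (2 * μ + Fintype.card n * lam) * A.trace ^ 2 := by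
    rw [trace_transpose_isotropicStiffness_mul, trace_transpose_mul_comm A,
      trace_isotropicStiffness]
    ring
  have hCA : lam * A.trace ^ 2 ≤ (Cᵀ * A).trace := by
    rw [trace_transpose_isotropicStiffness_mul]
    nlinarith [trace_transpose_mul_self_nonneg A]
  have hcoeff : 0 ≤ 2 * μ + Fintype.card n * lam := by positivity
  linarith [mul_le_mul_of_nonneg_left hCA hcoeff]

end Matrix

theorem stiffness_tensor_frobenius_bound_general
    (A : Matrix (Fin 2) (Fin 2) ℝ)
    (μ lam : ℝ) (hμ : 0 ≤ μ) (hlam : 0 ≤ lam)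
    (CA : Matrix (Fin 2) (Fin 2) ℝ)
    (hCA : CA = (2 * μ) • A + (lam * A.trace) • (1 : Matrix (Fin 2) (Fin 2) ℝ)) :
    (CAᵀ * CA).trace ≤ (4 * μ + 2 * lam) * (CAᵀ * A).trace := by
  have h := trace_transpose_isotropicStiffness_mul_self_le hμ hlam A
  rw [Fintype.card_fin, Nat.cast_ofNat] at h
  rwa [hCA]

/-- Lemma 3.3: for a symmetric 2×2 real matrix `A` and Lamé parameters `μ, lam ≥ 0`,
with `CA = 2μ A + lam tr(A) I₂`, the Frobenius inner products satisfy
`(CA) : (CA) ≤ (4μ + 2lam) ((CA) : A)`, where `X : Y = tr(Xᵀ Y)`. -/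
theorem stiffness_tensor_frobenius_bound
    (A : Matrix (Fin 2) (Fin 2) ℝ) (hA : A.IsSymm)
    (μ lam : ℝ) (hμ : 0 ≤ μ) (hlam : 0 ≤ lam)
    (CA : Matrix (Fin 2) (Fin 2) ℝ)
    (hCA : CA = (2 * μ) • A + (lam * A.trace) • (1 : Matrix (Fin 2) (Fin 2) ℝ)) :
    (CAᵀ * CA).trace ≤ (4 * μ + 2 * lam) * (CAᵀ * A).trace :=
  stiffness_tensor_frobenius_bound_general A μ lam hμ hlam CA hCA
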